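/- Let β = (β_n) be a Cantor real base and a ∈ ℕ^ℕ with val_β(a) < 1. Then a <_lex d*_β(1). Furthermore, if a does not end in 0^ω and val_β(a) ≤ 1, then a ≤_lex d*_β(1); i.e., d*_β(1) is lexicographically maximal among all infinite β-representations of real numbers in [0,1]. -/

import Mathlib

open Filter

/-- Product of the first `n+1` terms of the base sequence. -/
noncomputable def cprod (β : ℕ → ℝ) (n : ℕ) : ℝ := ∏ i ∈ Finset.range (n+1), β i

/-- A Cantor real base: all terms exceed 1 and the partial products tend to infinity. -/
def IsCantorBase (β : ℕ → ℝ) : Prop :=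
  (∀ n, 1 < β n) ∧ Tendsto (cprod β) atTop atTop

/-- Value of a real-digit sequence in a Cantor base. -/
noncomputable def valB (β : ℕ → ℝ) (a : ℕ → ℝ) : ℝ := ∑' n, a n / cprod β n

/-- Value of a natural-digit sequence in a Cantor base. -/
noncomputable def valN (β : ℕ → ℝ) (a : ℕ → ℕ) : ℝ := valB β (fun n => (a n : ℝ))

/-- Remainders of the greedy algorithm. -/
noncomputable def greedyRem (β : ℕ → ℝ) (x : ℝ) : ℕ → ℝ
  | 0 => β 0 * x - ⌊β 0 * x⌋
  | n+1 => β (n+1) * greedyRem β x n - ⌊β (n+1) * greedyRem β x n⌋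

/-- Digits of the greedy expansion. -/
noncomputable def greedy (β : ℕ → ℝ) (x : ℝ) : ℕ → ℕ
  | 0 => (⌊β 0 * x⌋).toNat
  | n+1 => (⌊β (n+1) * greedyRem β x n⌋).toNat

/-- Remainders of the quasi-greedy algorithm started at `1`:
at each step the largest digit keeping the remainder strictly positive is chosen. -/
noncomputable def qRem (β : ℕ → ℝ) : ℕ → ℝ
  | 0 => β 0 - (⌈β 0⌉ - 1)
  | n+1 => β (n+1) * qRem β n - (⌈β (n+1) * qRem β n⌉ - 1)

/-- Digits of the quasi-greedy expansion of `1`. -/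
noncomputable def quasiGreedy (β : ℕ → ℝ) : ℕ → ℕ
  | 0 => (⌈β 0⌉ - 1).toNat
  | n+1 => (⌈β (n+1) * qRem β n⌉ - 1).toNat

/-- The `n`-shifted base `β^{(n)}`. -/
def shiftBase (β : ℕ → ℝ) (n : ℕ) : ℕ → ℝ := fun k => β (n + k)

/-- The `n`-fold shift `σ^n` of a digit sequence. -/
def shiftSeq (a : ℕ → ℕ) (n : ℕ) : ℕ → ℕ := fun k => a (n + k)

/-- Strict lexicographic order on digit sequences. -/
def LexLt (a b : ℕ → ℕ) : Prop := ∃ ℓ, (∀ k, k < ℓ → a k = b k) ∧ a ℓ < b ℓ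

/-- Lexicographic order on digit sequences. -/
def LexLe (a b : ℕ → ℕ) : Prop := LexLt a b ∨ a = b

/-- The set of greedy expansions of points of `[0,1)`. -/
def Dset (β : ℕ → ℝ) : Set (ℕ → ℕ) := {a | ∃ x ∈ Set.Ico (0:ℝ) 1, a = greedy β x}

/-!
The quasi-greedy algorithm on `1` leaves remainders `r n = qRem β n ∈ (0, 1]` with
`∑_{k ≤ n} d*_k / (β_0 ⋯ β_k) = 1 - r n / (β_0 ⋯ β_n)`. Hence a digit sequence that first exceeds
`d*_β(1)` at position `ℓ` already has a partial sum up to `ℓ` of at least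
`1 - r ℓ / (β_0 ⋯ β_ℓ) + 1 / (β_0 ⋯ β_ℓ) ≥ 1`, and its value is `≥ 1`, even `> 1` if it has
infinitely many nonzero digits. Since `r n / (β_0 ⋯ β_n) → 0`, `d*_β(1)` itself has value `1`.
-/

open Finset

lemma lexLt_or_eq_or_lexLt (a b : ℕ → ℕ) : LexLt a b ∨ a = b ∨ LexLt b a := by
  classical
  by_cases hab : ∃ n, a n ≠ b n
  · have hpre (k : ℕ) (hk : k < Nat.find hab) : a k = b k := not_not.mp (Nat.find_min hab hk)
    rcases lt_or_gt_of_ne (Nat.find_spec hab) with hlt | hgt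
    · exact Or.inl ⟨_, hpre, hlt⟩
    · exact Or.inr (Or.inr ⟨_, fun k hk => (hpre k hk).symm, hgt⟩)
  · exact Or.inr (Or.inl (funext (not_exists_not.mp hab)))

lemma cast_toNat_ceil_sub_one {x : ℝ} (hx : 0 < x) :
    (((⌈x⌉ - 1).toNat : ℕ) : ℝ) = ⌈x⌉ - 1 := by
  have : 0 < ⌈x⌉ := Int.ceil_pos.mpr hx
  exact_mod_cast Int.toNat_of_nonneg (by omega : 0 ≤ ⌈x⌉ - 1)

lemma sub_ceil_sub_one_mem_Ioc (x : ℝ) : x - (⌈x⌉ - 1) ∈ Set.Ioc (0 : ℝ) 1 := by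
  constructor <;> linarith [Int.ceil_lt_add_one x, Int.le_ceil x]

section CantorBase

variable {β : ℕ → ℝ}

lemma cprod_succ (n : ℕ) : cprod β (n + 1) = cprod β n * β (n + 1) :=
  prod_range_succ β (n + 1)

lemma cprod_pos (hβ : ∀ n, 1 < β n) (n : ℕ) : 0 < cprod β n :=
  prod_pos fun i _ => one_pos.trans (hβ i)

lemma qRem_mem_Ioc (n : ℕ) : qRem β n ∈ Set.Ioc (0 : ℝ) 1 := by
  cases n <;> exact sub_ceil_sub_one_mem_Ioc _

lemma quasiGreedy_zero_cast (hβ : ∀ n, 1 < β n) : (quasiGreedy β 0 : ℝ) = β 0 - qRem β 0 := by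
  rw [quasiGreedy, qRem, cast_toNat_ceil_sub_one (one_pos.trans (hβ 0))]
  ring

lemma quasiGreedy_succ_cast (hβ : ∀ n, 1 < β n) (n : ℕ) :
    (quasiGreedy β (n + 1) : ℝ) = β (n + 1) * qRem β n - qRem β (n + 1) := by
  rw [quasiGreedy, qRem,
    cast_toNat_ceil_sub_one (mul_pos (one_pos.trans (hβ _)) (qRem_mem_Ioc n).1)]
  ring

lemma sum_range_quasiGreedy (hβ : ∀ n, 1 < β n) (n : ℕ) :
    ∑ k ∈ range (n + 1), (quasiGreedy β k : ℝ) / cprod β k = 1 - qRem β n / cprod β n := by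
  have hne (k : ℕ) : β k ≠ 0 := (one_pos.trans (hβ k)).ne'
  induction n with
  | zero =>
    rw [sum_range_one, quasiGreedy_zero_cast hβ, cprod, zero_add, prod_range_one]
    field_simp [hne 0]
  | succ n ih =>
    rw [sum_range_succ, ih, quasiGreedy_succ_cast hβ, cprod_succ]
    field_simp [hne (n + 1), (cprod_pos hβ n).ne']
    ring

lemma sum_range_le_valN (hβ : ∀ n, 1 < β n) {a : ℕ → ℕ}
    (hsum : Summable fun n => (a n : ℝ) / cprod β n) (n : ℕ) :
    ∑ k ∈ range n, (a k : ℝ) / cprod β k ≤ valN β a :=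
  hsum.sum_le_tsum _ fun k _ => div_nonneg (a k).cast_nonneg (cprod_pos hβ k).le

lemma sum_range_lt_valN (hβ : ∀ n, 1 < β n) {a : ℕ → ℕ}
    (hsum : Summable fun n => (a n : ℝ) / cprod β n) (hinf : ¬ ∃ N, ∀ n, N ≤ n → a n = 0)
    (n : ℕ) :
    ∑ k ∈ range n, (a k : ℝ) / cprod β k < valN β a := by
  push Not at hinf
  obtain ⟨m, hnm, ham⟩ := hinf n
  calc ∑ k ∈ range n, (a k : ℝ) / cprod β k
      < ∑ k ∈ range (m + 1), (a k : ℝ) / cprod β k := by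
        refine sum_lt_sum_of_subset (range_subset_range.mpr (by omega))
          (mem_range.mpr m.lt_succ_self) (by simpa using hnm)
          (div_pos (Nat.cast_pos.mpr (Nat.pos_of_ne_zero ham)) (cprod_pos hβ m)) ?_
        exact fun k _ _ => div_nonneg (a k).cast_nonneg (cprod_pos hβ k).le
    _ ≤ valN β a := sum_range_le_valN hβ hsum _

lemma one_le_sum_range_of_quasiGreedy_lexLt (hβ : ∀ n, 1 < β n) {a : ℕ → ℕ}
    (h : LexLt (quasiGreedy β) a) :
    ∃ n, 1 ≤ ∑ k ∈ range n, (a k : ℝ) / cprod β k := by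
  obtain ⟨ℓ, hpre, hlt⟩ := h
  have hc := cprod_pos hβ ℓ
  have hdigit : ((quasiGreedy β ℓ : ℝ) + 1) / cprod β ℓ ≤ a ℓ / cprod β ℓ :=
    div_le_div_of_nonneg_right (by exact_mod_cast hlt) hc.le
  have hrem : qRem β ℓ / cprod β ℓ ≤ 1 / cprod β ℓ :=
    div_le_div_of_nonneg_right (qRem_mem_Ioc ℓ).2 hc.le
  have hq := sum_range_quasiGreedy hβ ℓ
  rw [sum_range_succ] at hq
  have hagree : ∑ k ∈ range ℓ, (quasiGreedy β k : ℝ) / cprod β k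
      = ∑ k ∈ range ℓ, (a k : ℝ) / cprod β k :=
    sum_congr rfl fun k hk => by rw [hpre k (mem_range.mp hk)]
  refine ⟨ℓ + 1, ?_⟩
  rw [add_div] at hdigit
  rw [sum_range_succ]
  linarith

lemma hasSum_quasiGreedy (hβ : IsCantorBase β) :
    HasSum (fun n => (quasiGreedy β n : ℝ) / cprod β n) 1 := by
  obtain ⟨hβ, htop⟩ := hβ
  refine (hasSum_iff_tendsto_nat_of_nonneg
    (fun n => div_nonneg (Nat.cast_nonneg _) (cprod_pos hβ n).le) 1).mpr ?_
  rw [← tendsto_add_atTop_iff_nat 1]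
  simp only [sum_range_quasiGreedy hβ]
  have hrem : Tendsto (fun n => qRem β n / cprod β n) atTop (nhds 0) :=
    squeeze_zero (fun n => (div_pos (qRem_mem_Ioc n).1 (cprod_pos hβ n)).le)
      (fun n => div_le_div_of_nonneg_right (qRem_mem_Ioc n).2 (cprod_pos hβ n).le)
      (tendsto_const_nhds.div_atTop htop)
  simpa using tendsto_const_nhds.sub hrem

end CantorBase

theorem stmt_12 (β : ℕ → ℝ) (hβ : IsCantorBase β) (a : ℕ → ℕ)
    (hsum : Summable (fun n => (a n : ℝ) / cprod β n)) :
    (valN β a < 1 → LexLt a (quasiGreedy β)) ∧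
    ((¬ ∃ N, ∀ n, N ≤ n → a n = 0) → valN β a ≤ 1 → LexLe a (quasiGreedy β)) := by
  refine ⟨fun hval => ?_, fun hinf hval => ?_⟩
  · rcases lexLt_or_eq_or_lexLt a (quasiGreedy β) with hlt | rfl | hgt
    · exact hlt
    · exact absurd (hasSum_quasiGreedy hβ).tsum_eq hval.ne
    · obtain ⟨n, hn⟩ := one_le_sum_range_of_quasiGreedy_lexLt hβ.1 hgt
      exact absurd (hn.trans (sum_range_le_valN hβ.1 hsum n)) hval.not_ge
  · rcases lexLt_or_eq_or_lexLt a (quasiGreedy β) with hlt | heq | hgt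
    · exact Or.inl hlt
    · exact Or.inr heq
    · obtain ⟨n, hn⟩ := one_le_sum_range_of_quasiGreedy_lexLt hβ.1 hgt
      exact absurd (hn.trans_lt (sum_range_lt_valN hβ.1 hsum hinf n)) hval.not_gt
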